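/- Under the Bounded-Coefficient Scheme Hypotheses, assume additionally that all the maps T_1, …, T_m and I_1, …, I_m are continuous. Then for each i = 1, …, m, lim_{n→∞} ‖x_n − T_iⁿ x_n‖ = 0. -/

import Mathlib

/-!
Fix `p ∈ F`. The gauge bounds give one summable `e ≥ 0` with
`‖S w - p‖ ≤ (1 + eₙ) ‖w - p‖ + eₙ` on `K` for all `S = Tᵢⁿ, Iᵢⁿ`, so `‖xₙ - p‖` satisfies a
quasi-Fejér recursion and converges to some `d`. In each step of the scheme a point at distance
`→ d` from `p` is a convex combination of points at distance `≤ d + o(1)` from `p`; by uniform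
convexity (Schu's lemma) every component whose coefficient stays in a compact subinterval of
`(0, 1)` is asymptotically equal to the combination. This gives `xₙ₊₁ - xₙ → 0`,
`xₙ₊₁ - Tᵢⁿ yₙ → 0` and, once `‖yₙ - p‖ → d` is known, `yₙ - xₙ → 0`. Since `φᵢ` and `ψᵢ` are
continuous at `0` with value `0`, the defining inequalities carry the last limit over to
`Tᵢⁿ yₙ - Tᵢⁿ xₙ → 0`.
-/

open Filter Topology Finset

theorem exists_tendsto_of_le_add_of_summable {r e : ℕ → ℝ} (hr : BddBelow (Set.range r))
    (he : ∀ n, 0 ≤ e n) (hes : Summable e) (hrec : ∀ n, r (n + 1) ≤ r n + e n) :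
    ∃ L, Tendsto r atTop (𝓝 L) := by
  set u : ℕ → ℝ := fun n => r n - ∑ k ∈ range n, e k
  have hanti : Antitone u := antitone_nat_of_succ_le fun n => by
    simp only [u, sum_range_succ]
    linarith [hrec n]
  have hbdd : BddBelow (Set.range u) := by
    obtain ⟨c, hc⟩ := hr
    refine ⟨c - ∑' k, e k, ?_⟩
    rintro _ ⟨n, rfl⟩
    linarith [hc ⟨n, rfl⟩, hes.sum_le_tsum (range n) fun k _ => he k]
  refine ⟨_, ((tendsto_atTop_ciInf hanti hbdd).add hes.tendsto_sum_tsum_nat).congr fun n => ?_⟩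
  simp [u]

theorem exists_tendsto_of_le_one_add_mul_add {r e : ℕ → ℝ} (hr : ∀ n, 0 ≤ r n)
    (he : ∀ n, 0 ≤ e n) (hes : Summable e) (hrec : ∀ n, r (n + 1) ≤ (1 + e n) * r n + e n) :
    ∃ L, Tendsto r atTop (𝓝 L) := by
  set C := (r 0 + ∑' k, e k) * Real.exp (∑' k, e k)
  have hC : ∀ n, r n ≤ C := fun n => by
    have h := discrete_gronwall (hr 0) (fun n _ => hrec n) (fun n _ => he n) (fun n _ => he n)
      (Nat.zero_le n)
    rw [← range_eq_Ico] at h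
    refine h.trans (mul_le_mul (by gcongr; exact hes.sum_le_tsum _ fun k _ => he k) ?_
      (Real.exp_nonneg _) (add_nonneg (hr 0) (tsum_nonneg he)))
    exact Real.exp_le_exp.2 (hes.sum_le_tsum _ fun k _ => he k)
  refine exists_tendsto_of_le_add_of_summable ⟨0, ?_⟩ (fun n => mul_nonneg (he n) ?_)
    (hes.mul_right (C + 1)) fun n => ?_
  · rintro _ ⟨n, rfl⟩
    exact hr n
  · linarith [hr 0, hC 0]
  · nlinarith [hrec n, hC n, he n]

theorem le_one_add_mul_add {s e : ℝ} (hs : 0 ≤ s) (he : 0 ≤ e) : s ≤ (1 + e) * s + e := by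
  nlinarith

theorem one_add_mul_add_le_of_le {s c e : ℝ} (hs : 0 ≤ s) (hce : c ≤ e) :
    (1 + c) * s + c ≤ (1 + e) * s + e := by
  nlinarith

theorem one_add_mul_one_add_mul_add (a b s : ℝ) :
    (1 + a) * ((1 + b) * s + b) + a = (1 + (a + b + a * b)) * s + (a + b + a * b) := by
  ring

theorem Summable.add_add_mul_of_nonneg {a b : ℕ → ℝ} (ha : Summable a) (hb : Summable b)
    (ha0 : ∀ n, 0 ≤ a n) (hb0 : ∀ n, 0 ≤ b n) : Summable fun n => a n + b n + a n * b n :=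
  (ha.add hb).add <| (ha.mul_right (∑' k, b k)).of_nonneg_of_le
    (fun n => mul_nonneg (ha0 n) (hb0 n))
    fun n => mul_le_mul_of_nonneg_left (hb.le_tsum n fun k _ => hb0 k) (ha0 n)

theorem Filter.Tendsto.one_add_mul_add {r e : ℕ → ℝ} {d : ℝ} (hr : Tendsto r atTop (𝓝 d))
    (he : Tendsto e atTop (𝓝 0)) : Tendsto (fun n => (1 + e n) * r n + e n) atTop (𝓝 d) := by
  simpa using ((tendsto_const_nhds (x := (1 : ℝ)).add he).mul hr).add he

theorem Convex.exists_sum_smul_eq_smul_add_one_sub_smul {E ι : Type*} [AddCommGroup E]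
    [Module ℝ E] [Fintype ι] {s : Set E} (hs : Convex ℝ s) {c : ι → ℝ} {z : ι → E}
    (hc : ∀ l, 0 ≤ c l) (hcsum : ∑ l, c l = 1) (hz : ∀ l, z l ∈ s) {j : ι} (hcj : c j < 1) :
    ∃ v ∈ s, ∑ l, c l • z l = c j • z j + (1 - c j) • v := by
  classical
  have hrest : ∑ l ∈ univ.erase j, c l = 1 - c j := by rw [sum_erase_eq_sub (mem_univ j), hcsum]
  refine ⟨(univ.erase j).centerMass c z,
    hs.centerMass_mem (fun l _ => hc l) (by linarith) (fun l _ => hz l), ?_⟩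
  rw [Finset.centerMass, hrest, smul_smul, mul_inv_cancel₀ (by linarith), one_smul]
  exact (add_sum_erase _ (fun l => c l • z l) (mem_univ j)).symm

theorem Fin.sum_smul_cons {R E : Type*} [Semiring R] [AddCommMonoid E] [Module R E] {m : ℕ}
    (c : Fin (m + 1) → R) (z : E) (w : Fin m → E) :
    ∑ j, c j • (Fin.cons z w : Fin (m + 1) → E) j = c 0 • z + ∑ i, c i.succ • w i := by
  simp [Fin.sum_univ_succ]

theorem Convex.smul_add_sum_smul_mem {E : Type*} [AddCommGroup E] [Module ℝ E] {m : ℕ}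
    {s : Set E} (hs : Convex ℝ s) {c : Fin (m + 1) → ℝ} (hc : ∀ j, 0 ≤ c j) (hcsum : ∑ j, c j = 1)
    {z : E} {w : Fin m → E} (hz : z ∈ s) (hw : ∀ i, w i ∈ s) :
    c 0 • z + ∑ i, c i.succ • w i ∈ s := by
  rw [← Fin.sum_smul_cons]
  exact hs.sum_mem (fun j _ => hc j) hcsum fun j _ => Fin.cases hz hw j

section UniformConvex

variable {E : Type*} [NormedAddCommGroup E] [NormedSpace ℝ E]

theorem norm_smul_add_one_sub_smul_le {u v : E} {r δ κ t : ℝ} (hu : ‖u‖ ≤ r) (hv : ‖v‖ ≤ r)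
    (huv : ‖u + v‖ ≤ (2 - δ) * r) (hκ : 0 ≤ κ) (hκt : κ ≤ t) (hκt' : κ ≤ 1 - t) :
    ‖t • u + (1 - t) • v‖ ≤ (1 - κ * δ) * r :=
  calc ‖t • u + (1 - t) • v‖ = ‖κ • (u + v) + (t - κ) • u + (1 - t - κ) • v‖ := by
        congr 1; module
    _ ≤ κ * ((2 - δ) * r) + (t - κ) * r + (1 - t - κ) * r := by
      refine norm_add₃_le.trans ?_
      rw [norm_smul_of_nonneg hκ, norm_smul_of_nonneg (sub_nonneg.2 hκt),
        norm_smul_of_nonneg (by linarith)]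
      gcongr
    _ = (1 - κ * δ) * r := by ring

theorem exists_forall_norm_add_le_two_sub_mul [UniformConvexSpace E] {ε R : ℝ} (hε : 0 < ε)
    (hR : 0 < R) :
    ∃ δ, 0 < δ ∧ ∀ r, 0 < r → r ≤ R → ∀ ⦃u v : E⦄, ‖u‖ ≤ r → ‖v‖ ≤ r → ε ≤ ‖u - v‖ →
      ‖u + v‖ ≤ (2 - δ) * r := by
  obtain ⟨δ, hδ, h⟩ := exists_forall_closed_ball_dist_add_le_two_sub E (div_pos hε hR)
  refine ⟨δ, hδ, fun r hr hrR u v hu hv huv => ?_⟩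
  have hscale : ∀ w : E, ‖r⁻¹ • w‖ = ‖w‖ / r := fun w => by
    rw [norm_smul_of_nonneg (inv_nonneg.2 hr.le), inv_mul_eq_div]
  have key := h (x := r⁻¹ • u) (y := r⁻¹ • v)
    (by rw [hscale, div_le_one hr]; exact hu) (by rw [hscale, div_le_one hr]; exact hv)
    (by
      rw [← smul_sub, hscale, le_div_iff₀ hr]
      calc ε / R * r ≤ ε / R * R := by gcongr
        _ = ε := div_mul_cancel₀ ε hR.ne'
        _ ≤ ‖u - v‖ := huv)
  rwa [← smul_add, hscale, div_le_iff₀ hr] at key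

theorem tendsto_norm_sub_of_tendsto_norm_smul_add_one_sub_smul [UniformConvexSpace E]
    {α β d : ℝ} (hα : 0 < α) (hβ : β < 1) {t G : ℕ → ℝ} {u v : ℕ → E}
    (ht : ∀ n, t n ∈ Set.Icc α β) (hG : Tendsto G atTop (𝓝 d))
    (hu : ∀ n, ‖u n‖ ≤ G n) (hv : ∀ n, ‖v n‖ ≤ G n)
    (huv : Tendsto (fun n => ‖t n • u n + (1 - t n) • v n‖) atTop (𝓝 d)) :
    Tendsto (fun n => ‖u n - v n‖) atTop (𝓝 0) := by
  obtain rfl | hd := (ge_of_tendsto' huv fun n => norm_nonneg _).eq_or_lt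
  · refine squeeze_zero (fun n => norm_nonneg _)
      (fun n => (norm_sub_le _ _).trans (add_le_add (hu n) (hv n))) ?_
    simpa using hG.add hG
  refine tendsto_order.2 ⟨fun c hc => Eventually.of_forall fun n => hc.trans_le (norm_nonneg _),
    fun ε hε => ?_⟩
  obtain ⟨δ, hδ, hδuv⟩ :=
    exists_forall_norm_add_le_two_sub_mul (E := E) hε (by linarith : 0 < d + 1)
  set κ := min α (1 - β)
  have hκ : 0 < κ := lt_min hα (by linarith)
  -- `η` is small enough that losing a `κ δ`-fraction of `d + η` takes the combination below `d`
  set η := min 1 (κ * δ * d / 2)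
  have hη : 0 < η := lt_min one_pos (by positivity)
  have hlt : (1 - κ * δ) * (d + η) < d := by
    nlinarith [min_le_right 1 (κ * δ * d / 2), mul_pos (mul_pos hκ hδ) hη]
  filter_upwards [hG.eventually (eventually_le_nhds (by linarith : d < d + η)),
    huv.eventually (eventually_gt_nhds hlt)] with n hGn hn
  by_contra! hεn
  have hun := (hu n).trans hGn
  have hvn := (hv n).trans hGn
  have := norm_smul_add_one_sub_smul_le hun hvn
    (hδuv _ (by positivity) (by linarith [min_le_left 1 (κ * δ * d / 2)]) hun hvn hεn) hκ.le
    ((min_le_left _ _).trans (ht n).1) (by linarith [min_le_right α (1 - β), (ht n).2])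
  linarith

theorem tendsto_norm_sum_smul_sub [UniformConvexSpace E] {ι : Type*} [Fintype ι] {α β d : ℝ}
    (hα : 0 < α) (hβ : β < 1) {c : ι → ℕ → ℝ} (hc : ∀ l n, 0 ≤ c l n)
    (hcsum : ∀ n, ∑ l, c l n = 1) {j : ι} (hcj : ∀ n, c j n ∈ Set.Icc α β) {z : ℕ → ι → E}
    {p : E} {G : ℕ → ℝ}
    (hG : Tendsto G atTop (𝓝 d)) (hz : ∀ n l, ‖z n l - p‖ ≤ G n)
    (hw : Tendsto (fun n => ‖∑ l, c l n • z n l - p‖) atTop (𝓝 d)) :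
    Tendsto (fun n => ‖∑ l, c l n • z n l - z n j‖) atTop (𝓝 0) := by
  choose v hv hsplit using fun n =>
    (convex_closedBall p (G n)).exists_sum_smul_eq_smul_add_one_sub_smul (hc · n) (hcsum n)
      (fun l => mem_closedBall_iff_norm.2 (hz n l)) ((hcj n).2.trans_lt hβ)
  have hzv := tendsto_norm_sub_of_tendsto_norm_smul_add_one_sub_smul hα hβ hcj hG
    (u := fun n => z n j - p) (v := fun n => v n - p) (hz · j)
    (fun n => mem_closedBall_iff_norm.1 (hv n))
    (hw.congr fun n => by rw [hsplit n]; congr 1; module)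
  refine squeeze_zero (fun n => norm_nonneg _) (fun n => ?_) (by simpa using hzv)
  rw [hsplit n, show c j n • z n j + (1 - c j n) • v n - z n j = (1 - c j n) • (v n - z n j) by
    module, norm_smul_of_nonneg (by linarith [(hcj n).2]), norm_sub_rev]
  exact mul_le_of_le_one_left (norm_nonneg _) (by linarith [(hcj n).1])

end UniformConvex

section Scheme

variable {E : Type*} [NormedAddCommGroup E] [NormedSpace ℝ E] {m : ℕ}

/-- `uᵢ n` and `vᵢ n` stand for `Tᵢⁿ (y n)` and `Iᵢⁿ (x n)`. -/
structure TwoStepScheme (a b : Fin (m + 1) → ℕ → ℝ) (x y : ℕ → E) (u v : Fin m → ℕ → E) (p : E)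
    (e : ℕ → ℝ) : Prop where
  x_succ : ∀ n, x (n + 1) = a 0 n • x n + ∑ i, a i.succ n • u i n
  y_eq : ∀ n, y n = b 0 n • x n + ∑ i, b i.succ n • v i n
  norm_u_sub_le : ∀ i n, ‖u i n - p‖ ≤ (1 + e n) * ‖y n - p‖ + e n
  norm_v_sub_le : ∀ i n, ‖v i n - p‖ ≤ (1 + e n) * ‖x n - p‖ + e n
  a_nonneg : ∀ j n, 0 ≤ a j n
  sum_a : ∀ n, ∑ j, a j n = 1
  b_nonneg : ∀ j n, 0 ≤ b j n
  sum_b : ∀ n, ∑ j, b j n = 1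
  e_nonneg : ∀ n, 0 ≤ e n
  summable_e : Summable e

namespace TwoStepScheme

variable {a b : Fin (m + 1) → ℕ → ℝ} {x y : ℕ → E} {u v : Fin m → ℕ → E} {p : E} {e : ℕ → ℝ}
  (h : TwoStepScheme a b x y u v p e)
include h

theorem norm_y_sub_le (n : ℕ) : ‖y n - p‖ ≤ (1 + e n) * ‖x n - p‖ + e n := by
  rw [← mem_closedBall_iff_norm, h.y_eq n]
  exact (convex_closedBall _ _).smul_add_sum_smul_mem (h.b_nonneg · n) (h.sum_b n)
    (mem_closedBall_iff_norm.2 (le_one_add_mul_add (norm_nonneg _) (h.e_nonneg n)))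
    fun i => mem_closedBall_iff_norm.2 (h.norm_v_sub_le i n)

theorem x_succ_eq_sum (n : ℕ) :
    x (n + 1) = ∑ j, a j n • (Fin.cons (x n) (u · n) : Fin (m + 1) → E) j := by
  rw [Fin.sum_smul_cons, h.x_succ n]

theorem norm_cons_sub_le (n : ℕ) (j : Fin (m + 1)) :
    ‖(Fin.cons (x n) (u · n) : Fin (m + 1) → E) j - p‖ ≤
      (1 + e n) * ((1 + e n) * ‖x n - p‖ + e n) + e n := by
  have he := h.e_nonneg n
  refine Fin.cases ?_ (fun i => ?_) j
  · exact (le_one_add_mul_add (norm_nonneg _) he).trans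
      (le_one_add_mul_add (by positivity) he)
  · rw [Fin.cons_succ]
    exact (h.norm_u_sub_le i n).trans (by gcongr; exact h.norm_y_sub_le n)

theorem exists_tendsto_norm_sub : ∃ d, Tendsto (fun n => ‖x n - p‖) atTop (𝓝 d) := by
  refine exists_tendsto_of_le_one_add_mul_add (fun n => norm_nonneg _)
    (fun n => by have := h.e_nonneg n; positivity)
    (h.summable_e.add_add_mul_of_nonneg h.summable_e h.e_nonneg h.e_nonneg) fun n => ?_
  rw [← one_add_mul_one_add_mul_add, ← mem_closedBall_iff_norm, h.x_succ_eq_sum n]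
  exact (convex_closedBall _ _).sum_mem (fun j _ => h.a_nonneg j n) (h.sum_a n)
    fun j _ => mem_closedBall_iff_norm.2 (h.norm_cons_sub_le n j)

theorem tendsto_norm_x_succ_sub_cons [UniformConvexSpace E] {α β d : ℝ} (hα : 0 < α)
    (hβ : β < 1) (ha : ∀ j n, a j n ∈ Set.Icc α β) (hd : Tendsto (fun n => ‖x n - p‖) atTop (𝓝 d))
    (j : Fin (m + 1)) :
    Tendsto (fun n => ‖x (n + 1) - (Fin.cons (x n) (u · n) : Fin (m + 1) → E) j‖) atTop (𝓝 0) := by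
  have he := h.summable_e.tendsto_atTop_zero
  simp_rw [h.x_succ_eq_sum]
  exact tendsto_norm_sum_smul_sub hα hβ h.a_nonneg h.sum_a (ha j)
    ((hd.one_add_mul_add he).one_add_mul_add he) h.norm_cons_sub_le
    (by simpa only [← h.x_succ_eq_sum, Function.comp_def] using hd.comp (tendsto_add_atTop_nat 1))

theorem tendsto_norm_x_sub_u [UniformConvexSpace E] {α β : ℝ} (hα : 0 < α) (hβ : β < 1)
    (ha : ∀ j n, a j n ∈ Set.Icc α β) (i : Fin m) :
    Tendsto (fun n => ‖x n - u i n‖) atTop (𝓝 0) := by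
  obtain ⟨d, hd⟩ := h.exists_tendsto_norm_sub
  have hx := h.tendsto_norm_x_succ_sub_cons hα hβ ha hd 0
  have hu := h.tendsto_norm_x_succ_sub_cons hα hβ ha hd i.succ
  simp only [Fin.cons_zero, Fin.cons_succ] at hx hu
  refine squeeze_zero (fun n => norm_nonneg _) (fun n => ?_) (by simpa using hx.add hu)
  rw [norm_sub_rev (x (n + 1)) (x n)]
  exact norm_sub_le_norm_sub_add_norm_sub _ _ _

theorem tendsto_norm_y_sub [UniformConvexSpace E] [NeZero m] {α β d : ℝ} (hα : 0 < α)
    (hβ : β < 1) (ha : ∀ j n, a j n ∈ Set.Icc α β) (hd : Tendsto (fun n => ‖x n - p‖) atTop (𝓝 d)) :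
    Tendsto (fun n => ‖y n - p‖) atTop (𝓝 d) := by
  have he := h.summable_e.tendsto_atTop_zero
  -- `u₀ n = x (n + 1) + o(1)` and `‖u₀ n - p‖ ≤ (1 + e n) ‖y n - p‖ + e n` bound `‖y n - p‖` below
  have hu : Tendsto (fun n => ‖u 0 n - p‖) atTop (𝓝 d) := by
    have hxu := h.tendsto_norm_x_succ_sub_cons hα hβ ha hd (0 : Fin m).succ
    simp only [Fin.cons_succ] at hxu
    have hdiff : Tendsto (fun n => ‖u 0 n - p‖ - ‖x (n + 1) - p‖) atTop (𝓝 0) :=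
      squeeze_zero_norm (fun n => (abs_norm_sub_norm_le _ _).trans_eq
        (by rw [sub_sub_sub_cancel_right, norm_sub_rev])) hxu
    simpa using hdiff.add (hd.comp (tendsto_add_atTop_nat 1))
  refine tendsto_of_tendsto_of_tendsto_of_le_of_le (g := fun n => (‖u 0 n - p‖ - e n) / (1 + e n))
    (by simpa [Pi.div_def] using
      (hu.sub he).div (tendsto_const_nhds (x := (1 : ℝ)).add he) (by norm_num))
    (hd.one_add_mul_add he) (fun n => ?_) (fun n => h.norm_y_sub_le n)
  have := h.e_nonneg n
  rw [div_le_iff₀ (by positivity)]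
  linarith [h.norm_u_sub_le 0 n]

theorem tendsto_norm_y_sub_x [UniformConvexSpace E] [NeZero m] {α β α' β' : ℝ} (hα : 0 < α)
    (hβ : β < 1) (ha : ∀ j n, a j n ∈ Set.Icc α β) (hα' : 0 < α') (hβ' : β' < 1)
    (hb : ∀ n, b 0 n ∈ Set.Icc α' β') : Tendsto (fun n => ‖y n - x n‖) atTop (𝓝 0) := by
  obtain ⟨d, hd⟩ := h.exists_tendsto_norm_sub
  have hyx := tendsto_norm_sum_smul_sub hα' hβ' h.b_nonneg h.sum_b hb
    (hd.one_add_mul_add h.summable_e.tendsto_atTop_zero)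
    (z := fun n => (Fin.cons (x n) (v · n) : Fin (m + 1) → E)) (p := p) (fun n => Fin.cases
      (le_one_add_mul_add (norm_nonneg _) (h.e_nonneg n)) fun i => h.norm_v_sub_le i n)
    (by simpa only [Fin.sum_smul_cons, ← h.y_eq] using h.tendsto_norm_y_sub hα hβ ha hd)
  simpa only [Fin.sum_smul_cons, ← h.y_eq, Fin.cons_zero] using hyx

end TwoStepScheme

end Scheme

theorem add_mul_add_le_one_add_mul_add {φ : ℝ → ℝ} {M Ms μ ν s : ℝ}
    (hφ : MonotoneOn φ (Set.Ici 0)) (hφ0 : ∀ t, 0 ≤ t → 0 ≤ φ t) (hM : 0 ≤ M) (hMs : 0 ≤ Ms)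
    (hφM : ∀ ξ, M ≤ ξ → φ ξ ≤ Ms * ξ) (hμ : 0 ≤ μ) (hν : 0 ≤ ν) (hs : 0 ≤ s) :
    s + μ * φ s + ν ≤ (1 + (μ * (φ M + Ms) + ν)) * s + (μ * (φ M + Ms) + ν) := by
  have hφs : φ s ≤ φ M + Ms * s := by
    rcases le_total s M with hsM | hMs'
    · linarith [hφ hs hM hsM, mul_nonneg hMs hs]
    · linarith [hφM s hMs', hφ0 M hM]
  nlinarith [mul_le_mul_of_nonneg_left hφs hμ, mul_nonneg hμ hs, mul_nonneg hν hs,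
    mul_nonneg (mul_nonneg hμ (hφ0 M hM)) hs, mul_nonneg hμ hMs]

theorem tendsto_add_mul_comp_add_zero {φ : ℝ → ℝ} {D μ ν : ℕ → ℝ}
    (hφ : ContinuousWithinAt φ (Set.Ici 0) 0) (hφ0 : φ 0 = 0) (hD : Tendsto D atTop (𝓝 0))
    (hD0 : ∀ n, 0 ≤ D n) (hμ : Tendsto μ atTop (𝓝 0)) (hν : Tendsto ν atTop (𝓝 0)) :
    Tendsto (fun n => D n + μ n * φ (D n) + ν n) atTop (𝓝 0) := by
  have hφD : Tendsto (fun n => φ (D n)) atTop (𝓝 0) := hφ0 ▸ hφ.tendsto.comp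
    (tendsto_nhdsWithin_of_tendsto_nhds_of_eventually_within _ hD (Eventually.of_forall hD0))
  simpa using (hD.add (hμ.mul hφD)).add hν

theorem exists_summable_norm_iterate_sub_le {X ι : Type*} [NormedAddCommGroup X] [Fintype ι]
    {K : Set X} {T S : ι → X → X} {p : X} (hpK : p ∈ K) (hp : ∀ i, T i p = p ∧ S i p = p)
    {μ ν tμ tν : ι → ℕ → ℝ} (hμ : ∀ i n, 0 ≤ μ i n) (hν : ∀ i n, 0 ≤ ν i n)
    (htμ : ∀ i n, 0 ≤ tμ i n) (htν : ∀ i n, 0 ≤ tν i n) (hμs : ∀ i, Summable (μ i))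
    (hνs : ∀ i, Summable (ν i)) (htμs : ∀ i, Summable (tμ i)) (htνs : ∀ i, Summable (tν i))
    {φ ψ : ι → ℝ → ℝ} (hφ : ∀ i, MonotoneOn (φ i) (Set.Ici 0))
    (hψ : ∀ i, MonotoneOn (ψ i) (Set.Ici 0)) (hφ0 : ∀ i t, 0 ≤ t → 0 ≤ φ i t)
    (hψ0 : ∀ i t, 0 ≤ t → 0 ≤ ψ i t) {M Ms N Ns : ι → ℝ} (hM : ∀ i, 0 ≤ M i)
    (hMs : ∀ i, 0 ≤ Ms i) (hN : ∀ i, 0 ≤ N i) (hNs : ∀ i, 0 ≤ Ns i)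
    (hφM : ∀ i ξ, M i ≤ ξ → φ i ξ ≤ Ms i * ξ) (hψN : ∀ i ζ, N i ≤ ζ → ψ i ζ ≤ Ns i * ζ)
    (hS : ∀ i, ∀ n, 1 ≤ n → ∀ x ∈ K, ∀ y ∈ K,
      ‖(S i)^[n] x - (S i)^[n] y‖ ≤ ‖x - y‖ + tμ i n * ψ i ‖x - y‖ + tν i n)
    (hT : ∀ i, ∀ n, 1 ≤ n → ∀ x ∈ K, ∀ y ∈ K,
      ‖(T i)^[n] x - (T i)^[n] y‖ ≤
        ‖(S i)^[n] x - (S i)^[n] y‖ + μ i n * φ i ‖(S i)^[n] x - (S i)^[n] y‖ + ν i n) :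
    ∃ e : ℕ → ℝ, (∀ n, 0 ≤ e n) ∧ Summable e ∧ ∀ i n, ∀ w ∈ K,
      ‖(S i)^[n] w - p‖ ≤ (1 + e n) * ‖w - p‖ + e n ∧
        ‖(T i)^[n] w - p‖ ≤ (1 + e n) * ‖w - p‖ + e n := by
  set eT : ι → ℕ → ℝ := fun i n => μ i n * (φ i (M i) + Ms i) + ν i n
  set eS : ι → ℕ → ℝ := fun i n => tμ i n * (ψ i (N i) + Ns i) + tν i n
  set c : ι → ℕ → ℝ := fun i n => eT i n + eS i n + eT i n * eS i n
  have heT : ∀ i n, 0 ≤ eT i n := fun i n =>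
    add_nonneg (mul_nonneg (hμ i n) (add_nonneg (hφ0 i _ (hM i)) (hMs i))) (hν i n)
  have heS : ∀ i n, 0 ≤ eS i n := fun i n =>
    add_nonneg (mul_nonneg (htμ i n) (add_nonneg (hψ0 i _ (hN i)) (hNs i))) (htν i n)
  have hc : ∀ i n, 0 ≤ c i n := fun i n =>
    add_nonneg (add_nonneg (heT i n) (heS i n)) (mul_nonneg (heT i n) (heS i n))
  refine ⟨fun n => ∑ i, c i n, fun n => sum_nonneg fun i _ => hc i n,
    summable_sum fun i _ => (((hμs i).mul_right _).add (hνs i)).add_add_mul_of_nonneg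
      (((htμs i).mul_right _).add (htνs i)) (heT i) (heS i), fun i n w hw => ?_⟩
  suffices h : ‖(S i)^[n] w - p‖ ≤ (1 + c i n) * ‖w - p‖ + c i n ∧
      ‖(T i)^[n] w - p‖ ≤ (1 + c i n) * ‖w - p‖ + c i n by
    have hci := one_add_mul_add_le_of_le (norm_nonneg (w - p))
      (single_le_sum (fun j _ => hc j n) (mem_univ i))
    exact h.imp (·.trans hci) (·.trans hci)
  obtain rfl | hn := n.eq_zero_or_pos
  · exact ⟨le_one_add_mul_add (norm_nonneg _) (hc i 0), le_one_add_mul_add (norm_nonneg _) (hc i 0)⟩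
  have hSw : ‖(S i)^[n] w - p‖ ≤ (1 + eS i n) * ‖w - p‖ + eS i n := by
    simpa only [Function.iterate_fixed (hp i).2] using (hS i n hn w hw p hpK).trans
      (add_mul_add_le_one_add_mul_add (hψ i) (hψ0 i) (hN i) (hNs i) (hψN i) (htμ i n) (htν i n)
        (norm_nonneg _))
  have hTw := (hT i n hn w hw p hpK).trans
    (add_mul_add_le_one_add_mul_add (hφ i) (hφ0 i) (hM i) (hMs i) (hφM i) (hμ i n) (hν i n)
      (norm_nonneg _))
  rw [Function.iterate_fixed (hp i).1, Function.iterate_fixed (hp i).2] at hTw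
  refine ⟨hSw.trans (one_add_mul_add_le_of_le (norm_nonneg _) ?_), ?_⟩
  · linarith [heT i n, mul_nonneg (heT i n) (heS i n)]
  · rw [← one_add_mul_one_add_mul_add]
    exact hTw.trans (by have := heT i n; gcongr)

theorem tendsto_norm_iterate_sub_iterate {X : Type*} [NormedAddCommGroup X] {K : Set X}
    {T S : X → X} {μ ν tμ tν : ℕ → ℝ} {φ ψ : ℝ → ℝ} (hφ : ContinuousWithinAt φ (Set.Ici 0) 0)
    (hφ0 : φ 0 = 0) (hψ : ContinuousWithinAt ψ (Set.Ici 0) 0) (hψ0 : ψ 0 = 0)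
    (hμ : Tendsto μ atTop (𝓝 0)) (hν : Tendsto ν atTop (𝓝 0)) (htμ : Tendsto tμ atTop (𝓝 0))
    (htν : Tendsto tν atTop (𝓝 0))
    (hS : ∀ n, 1 ≤ n → ∀ x ∈ K, ∀ y ∈ K,
      ‖S^[n] x - S^[n] y‖ ≤ ‖x - y‖ + tμ n * ψ ‖x - y‖ + tν n)
    (hT : ∀ n, 1 ≤ n → ∀ x ∈ K, ∀ y ∈ K,
      ‖T^[n] x - T^[n] y‖ ≤ ‖S^[n] x - S^[n] y‖ + μ n * φ ‖S^[n] x - S^[n] y‖ + ν n)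
    {s t : ℕ → X} (hs : ∀ n, s n ∈ K) (ht : ∀ n, t n ∈ K)
    (hst : Tendsto (fun n => ‖s n - t n‖) atTop (𝓝 0)) :
    Tendsto (fun n => ‖T^[n] (s n) - T^[n] (t n)‖) atTop (𝓝 0) := by
  have hSst : Tendsto (fun n => ‖S^[n] (s n) - S^[n] (t n)‖) atTop (𝓝 0) :=
    squeeze_zero' (.of_forall fun n => norm_nonneg _)
      ((eventually_ge_atTop 1).mono fun n hn => hS n hn _ (hs n) _ (ht n))
      (tendsto_add_mul_comp_add_zero hψ hψ0 hst (fun n => norm_nonneg _) htμ htν)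
  exact squeeze_zero' (.of_forall fun n => norm_nonneg _)
    ((eventually_ge_atTop 1).mono fun n hn => hT n hn _ (hs n) _ (ht n))
    (tendsto_add_mul_comp_add_zero hφ hφ0 hSst (fun n => norm_nonneg _) hμ hν)

theorem stmt7_general
    {X : Type*} [NormedAddCommGroup X] [NormedSpace ℝ X]
    [UniformConvexSpace X]
    {K : Set X} (hKco : Convex ℝ K)
    {m : ℕ}
    (T I : Fin m → X → X)
    (hTK : ∀ i, Set.MapsTo (T i) K K) (hIK : ∀ i, Set.MapsTo (I i) K K)
    (μ lam tμ tlam : Fin m → ℕ → ℝ)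
    (hμ0 : ∀ i n, 0 ≤ μ i n) (hlam0 : ∀ i n, 0 ≤ lam i n)
    (htμ0 : ∀ i n, 0 ≤ tμ i n) (htlam0 : ∀ i n, 0 ≤ tlam i n)
    (hμlim : ∀ i, Tendsto (μ i) atTop (nhds 0)) (hlamlim : ∀ i, Tendsto (lam i) atTop (nhds 0))
    (htμlim : ∀ i, Tendsto (tμ i) atTop (nhds 0))
    (htlamlim : ∀ i, Tendsto (tlam i) atTop (nhds 0))
    (hμsum : ∀ i, Summable (μ i)) (hlamsum : ∀ i, Summable (lam i))
    (htμsum : ∀ i, Summable (tμ i)) (htlamsum : ∀ i, Summable (tlam i))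
    (φ ψ : Fin m → ℝ → ℝ)
    (hφmono : ∀ i, StrictMonoOn (φ i) (Set.Ici 0))
    (hφcont : ∀ i, ContinuousOn (φ i) (Set.Ici 0))
    (hφ0 : ∀ i, φ i 0 = 0) (hφpos : ∀ i t, 0 ≤ t → 0 ≤ φ i t)
    (hψmono : ∀ i, StrictMonoOn (ψ i) (Set.Ici 0))
    (hψcont : ∀ i, ContinuousOn (ψ i) (Set.Ici 0))
    (hψ0 : ∀ i, ψ i 0 = 0) (hψpos : ∀ i t, 0 ≤ t → 0 ≤ ψ i t)
    (hI : ∀ i, ∀ n, 1 ≤ n → ∀ x ∈ K, ∀ y ∈ K,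
      ‖(I i)^[n] x - (I i)^[n] y‖ ≤ ‖x - y‖ + tμ i n * ψ i ‖x - y‖ + tlam i n)
    (hT : ∀ i, ∀ n, 1 ≤ n → ∀ x ∈ K, ∀ y ∈ K,
      ‖(T i)^[n] x - (T i)^[n] y‖ ≤
        ‖(I i)^[n] x - (I i)^[n] y‖ + μ i n * φ i ‖(I i)^[n] x - (I i)^[n] y‖ + lam i n)
    (F : Set X)
    (hFdef : ∀ p, p ∈ F ↔ p ∈ K ∧ ∀ i, T i p = p ∧ I i p = p)
    (hFne : F.Nonempty)
    (M Ms N Ns : Fin m → ℝ)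
    (hM : ∀ i, 0 < M i) (hMs : ∀ i, 0 < Ms i) (hN : ∀ i, 0 < N i) (hNs : ∀ i, 0 < Ns i)
    (hφbound : ∀ i ξ, M i ≤ ξ → φ i ξ ≤ Ms i * ξ)
    (hψbound : ∀ i ζ, N i ≤ ζ → ψ i ζ ≤ Ns i * ζ)
    (alo ahi blo bhi : ℝ)
    (halo : 0 < alo) (hahi1 : ahi < 1)
    (hblo : 0 < blo) (hbhi1 : bhi < 1)
    (a b : Fin (m + 1) → ℕ → ℝ)
    (ha : ∀ j n, a j n ∈ Set.Icc alo ahi) (hb : ∀ j n, b j n ∈ Set.Icc blo bhi)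
    (hasum : ∀ n, ∑ j, a j n = 1) (hbsum : ∀ n, ∑ j, b j n = 1)
    (x y : ℕ → X) (hx0 : x 0 ∈ K)
    (hy : ∀ n, y n = b 0 n • x n + ∑ i : Fin m, b i.succ n • (I i)^[n] (x n))
    (hxrec : ∀ n, x (n + 1) = a 0 n • x n + ∑ i : Fin m, a i.succ n • (T i)^[n] (y n))
    : ∀ i, Tendsto (fun n => ‖x n - (T i)^[n] (x n)‖) atTop (nhds 0) := by
  obtain ⟨p, hpK, hp⟩ := hFne.imp fun p hp => (hFdef p).1 hp
  obtain ⟨e, he0, hes, he⟩ := exists_summable_norm_iterate_sub_le hpK hp hμ0 hlam0 htμ0 htlam0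
    hμsum hlamsum htμsum htlamsum (fun i => (hφmono i).monotoneOn) (fun i => (hψmono i).monotoneOn)
    hφpos hψpos (fun i => (hM i).le) (fun i => (hMs i).le) (fun i => (hN i).le)
    (fun i => (hNs i).le) hφbound hψbound hI hT
  have ha0 : ∀ j n, 0 ≤ a j n := fun j n => halo.le.trans (ha j n).1
  have hb0 : ∀ j n, 0 ≤ b j n := fun j n => hblo.le.trans (hb j n).1
  have hyK : ∀ n, x n ∈ K → y n ∈ K := fun n hxn => (hy n).symm ▸
    hKco.smul_add_sum_smul_mem (hb0 · n) (hbsum n) hxn fun i => (hIK i).iterate n hxn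
  have hxK : ∀ n, x n ∈ K := Nat.rec hx0 fun n hxn => (hxrec n).symm ▸
    hKco.smul_add_sum_smul_mem (ha0 · n) (hasum n) hxn fun i => (hTK i).iterate n (hyK n hxn)
  have hS : TwoStepScheme a b x y (fun i n => (T i)^[n] (y n)) (fun i n => (I i)^[n] (x n)) p e :=
    ⟨hxrec, hy, fun i n => (he i n _ (hyK n (hxK n))).2, fun i n => (he i n _ (hxK n)).1,
      ha0, hasum, hb0, hbsum, he0, hes⟩
  intro i
  have : NeZero m := NeZero.of_pos i.pos
  have hTyx := tendsto_norm_iterate_sub_iterate (hφcont i 0 Set.self_mem_Ici) (hφ0 i)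
    (hψcont i 0 Set.self_mem_Ici) (hψ0 i) (hμlim i) (hlamlim i) (htμlim i) (htlamlim i) (hI i)
    (hT i) (fun n => hyK n (hxK n)) hxK (hS.tendsto_norm_y_sub_x halo hahi1 ha hblo hbhi1 (hb 0))
  exact squeeze_zero (fun n => norm_nonneg _)
    (fun n => norm_sub_le_norm_sub_add_norm_sub _ ((T i)^[n] (y n)) _)
    (by simpa using (hS.tendsto_norm_x_sub_u halo hahi1 ha i).add hTyx)

/-- part of Proposition 3.6: under the bounded-coefficient scheme
hypotheses with all maps continuous, `lim ‖x n - (T i)ⁿ (x n)‖ = 0` for each `i`. -/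
theorem stmt7
    {X : Type*} [NormedAddCommGroup X] [NormedSpace ℝ X] [CompleteSpace X]
    [UniformConvexSpace X]
    {K : Set X} (hKne : K.Nonempty) (hKcl : IsClosed K) (hKco : Convex ℝ K)
    {m : ℕ} (hm : 1 ≤ m)
    (T I : Fin m → X → X)
    (hTK : ∀ i, Set.MapsTo (T i) K K) (hIK : ∀ i, Set.MapsTo (I i) K K)
    (hTcont : ∀ i, ContinuousOn (T i) K) (hIcont : ∀ i, ContinuousOn (I i) K)
    (μ lam tμ tlam : Fin m → ℕ → ℝ)
    (hμ0 : ∀ i n, 0 ≤ μ i n) (hlam0 : ∀ i n, 0 ≤ lam i n)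
    (htμ0 : ∀ i n, 0 ≤ tμ i n) (htlam0 : ∀ i n, 0 ≤ tlam i n)
    (hμlim : ∀ i, Tendsto (μ i) atTop (nhds 0)) (hlamlim : ∀ i, Tendsto (lam i) atTop (nhds 0))
    (htμlim : ∀ i, Tendsto (tμ i) atTop (nhds 0))
    (htlamlim : ∀ i, Tendsto (tlam i) atTop (nhds 0))
    (hμsum : ∀ i, Summable (μ i)) (hlamsum : ∀ i, Summable (lam i))
    (htμsum : ∀ i, Summable (tμ i)) (htlamsum : ∀ i, Summable (tlam i))
    (φ ψ : Fin m → ℝ → ℝ)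
    (hφmono : ∀ i, StrictMonoOn (φ i) (Set.Ici 0))
    (hφcont : ∀ i, ContinuousOn (φ i) (Set.Ici 0))
    (hφ0 : ∀ i, φ i 0 = 0) (hφpos : ∀ i t, 0 ≤ t → 0 ≤ φ i t)
    (hψmono : ∀ i, StrictMonoOn (ψ i) (Set.Ici 0))
    (hψcont : ∀ i, ContinuousOn (ψ i) (Set.Ici 0))
    (hψ0 : ∀ i, ψ i 0 = 0) (hψpos : ∀ i t, 0 ≤ t → 0 ≤ ψ i t)
    (hI : ∀ i, ∀ n, 1 ≤ n → ∀ x ∈ K, ∀ y ∈ K,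
      ‖(I i)^[n] x - (I i)^[n] y‖ ≤ ‖x - y‖ + tμ i n * ψ i ‖x - y‖ + tlam i n)
    (hT : ∀ i, ∀ n, 1 ≤ n → ∀ x ∈ K, ∀ y ∈ K,
      ‖(T i)^[n] x - (T i)^[n] y‖ ≤
        ‖(I i)^[n] x - (I i)^[n] y‖ + μ i n * φ i ‖(I i)^[n] x - (I i)^[n] y‖ + lam i n)
    (F : Set X)
    (hFdef : ∀ p, p ∈ F ↔ p ∈ K ∧ ∀ i, T i p = p ∧ I i p = p)
    (hFne : F.Nonempty)
    (M Ms N Ns : Fin m → ℝ)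
    (hM : ∀ i, 0 < M i) (hMs : ∀ i, 0 < Ms i) (hN : ∀ i, 0 < N i) (hNs : ∀ i, 0 < Ns i)
    (hφbound : ∀ i ξ, M i ≤ ξ → φ i ξ ≤ Ms i * ξ)
    (hψbound : ∀ i ζ, N i ≤ ζ → ψ i ζ ≤ Ns i * ζ)
    (alo ahi blo bhi : ℝ)
    (halo : 0 < alo) (hahi : alo < ahi) (hahi1 : ahi < 1)
    (hblo : 0 < blo) (hbhi : blo < bhi) (hbhi1 : bhi < 1)
    (a b : Fin (m + 1) → ℕ → ℝ)
    (ha : ∀ j n, a j n ∈ Set.Icc alo ahi) (hb : ∀ j n, b j n ∈ Set.Icc blo bhi)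
    (hasum : ∀ n, ∑ j, a j n = 1) (hbsum : ∀ n, ∑ j, b j n = 1)
    (x y : ℕ → X) (hx0 : x 0 ∈ K)
    (hy : ∀ n, y n = b 0 n • x n + ∑ i : Fin m, b i.succ n • (I i)^[n] (x n))
    (hxrec : ∀ n, x (n + 1) = a 0 n • x n + ∑ i : Fin m, a i.succ n • (T i)^[n] (y n))
    : ∀ i, Tendsto (fun n => ‖x n - (T i)^[n] (x n)‖) atTop (nhds 0) :=
  stmt7_general hKco T I hTK hIK μ lam tμ tlam hμ0 hlam0 htμ0 htlam0 hμlim hlamlim htμlim htlamlim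
    hμsum hlamsum htμsum htlamsum φ ψ hφmono hφcont hφ0 hφpos hψmono hψcont hψ0 hψpos hI hT F hFdef
    hFne M Ms N Ns hM hMs hN hNs hφbound hψbound alo ahi blo bhi halo hahi1 hblo hbhi1 a b ha hb
    hasum hbsum x y hx0 hy hxrec
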